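/- arXiv:1801.02457 — 7 statements merged into one kernel-verified Lean document; each statement's English description precedes it below -/
import Mathlib

section
/- Let S = A × B × C, f : A → A', g : B → B', and h₁, h₃ be as in the context. For all transition relations r₁, r₂ ⊆ S × S, the concretized enabled-transition set of the partial abstraction is contained in that of the combined abstraction: (Prod.map h₁ h₁)⁻¹' E((Prod.map h₁ h₁) '' r₁, (Prod.map h₁ h₁) '' r₂) ⊆ (Prod.map h₃ h₃)⁻¹' E((Prod.map h₃ h₃) '' r₁, (Prod.map h₃ h₃) '' r₂). -/
/-- `dom r₁` is the set of states enabling transition relation `r₁`. -/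
def dom {S : Type*} (r₁ : Set (S × S)) : Set S :=
  {s | ∃ t, (s, t) ∈ r₁}

/-- `E r₁ r₂`: the transitions of `r₂` whose target state enables `r₁`. -/
def E {S : Type*} (r₁ r₂ : Set (S × S)) : Set (S × S) :=
  {p ∈ r₂ | p.2 ∈ dom r₁}

/-- The concretized enabled-transition set of the partial abstraction is
contained in that of the combined abstraction. -/
theorem enabled_concretization_mono
    {A A' B B' C : Type*} (f : A → A') (g : B → B')
    (h₁ : A × B × C → A' × B × C) (h₃ : A × B × C → A' × B' × C)
    (hh₁ : ∀ a b c, h₁ (a, b, c) = (f a, b, c))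
    (hh₃ : ∀ a b c, h₃ (a, b, c) = (f a, g b, c))
    (r₁ r₂ : Set ((A × B × C) × (A × B × C))) :
    (Prod.map h₁ h₁) ⁻¹' E ((Prod.map h₁ h₁) '' r₁) ((Prod.map h₁ h₁) '' r₂) ⊆
      (Prod.map h₃ h₃) ⁻¹' E ((Prod.map h₃ h₃) '' r₁) ((Prod.map h₃ h₃) '' r₂) := by
  have key : ∀ x y : A × B × C, h₁ x = h₁ y → h₃ x = h₃ y := by
    rintro ⟨a, b, c⟩ ⟨a', b', c'⟩ hxy
    rw [hh₁, hh₁] at hxy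
    rw [hh₃, hh₃]
    obtain ⟨h1, h2, h3⟩ := Prod.mk.injEq .. ▸ hxy
    simp_all
  rintro ⟨x, y⟩ ⟨⟨q, hq, hqe⟩, t, u, hu, hue⟩
  simp only [Prod.map, Prod.mk.injEq] at hqe hue
  refine ⟨⟨q, hq, ?_⟩, h₃ u.2, u, hu, ?_⟩
  · simp only [Prod.map, Prod.mk.injEq]
    exact ⟨key _ _ hqe.1, key _ _ hqe.2⟩
  · simp only [Prod.map, Prod.mk.injEq]
    exact ⟨key _ _ hue.1, trivial⟩
end

section
/- Transition-level imprecision is inherited by incremental abstractions: let S = A × B × C, f : A → A', g : B → B', and h₁, h₃ be as in the context, and let r₁, r₂ ⊆ S × S be transition relations. If h₁ is imprecise with respect to (r₁, r₂), i.e., E(r₁, r₂) is a strict subset of (Prod.map h₁ h₁)⁻¹' E((Prod.map h₁ h₁) '' r₁, (Prod.map h₁ h₁) '' r₂), then h₃ is imprecise with respect to (r₁, r₂), i.e., E(r₁, r₂) is a strict subset of (Prod.map h₃ h₃)⁻¹' E((Prod.map h₃ h₃) '' r₁, (Prod.map h₃ h₃) '' r₂). -/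
/-- Transition-level imprecision is inherited by incremental abstractions. -/
theorem imprecision_inherited
    {A A' B B' C : Type*} (f : A → A') (g : B → B')
    (h₁ : A × B × C → A' × B × C) (h₃ : A × B × C → A' × B' × C)
    (hh₁ : ∀ a b c, h₁ (a, b, c) = (f a, b, c))
    (hh₃ : ∀ a b c, h₃ (a, b, c) = (f a, g b, c))
    (r₁ r₂ : Set ((A × B × C) × (A × B × C)))
    (himp : E r₁ r₂ ⊂
      (Prod.map h₁ h₁) ⁻¹' E ((Prod.map h₁ h₁) '' r₁) ((Prod.map h₁ h₁) '' r₂)) :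
    E r₁ r₂ ⊂
      (Prod.map h₃ h₃) ⁻¹' E ((Prod.map h₃ h₃) '' r₁) ((Prod.map h₃ h₃) '' r₂) := by
  set k : A' × B × C → A' × B' × C := fun x => (x.1, g x.2.1, x.2.2) with hk
  have hcomp : ∀ s : A × B × C, h₃ s = k (h₁ s) := by
    rintro ⟨a, b, c⟩; simp [hh₁, hh₃, hk]
  have hsub13 : (Prod.map h₁ h₁) ⁻¹' E ((Prod.map h₁ h₁) '' r₁) ((Prod.map h₁ h₁) '' r₂)
      ⊆ (Prod.map h₃ h₃) ⁻¹' E ((Prod.map h₃ h₃) '' r₁) ((Prod.map h₃ h₃) '' r₂) := by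
    rintro ⟨s, t⟩ ⟨⟨q, hq, hqe⟩, u, q', hq', hq'e⟩
    refine ⟨⟨q, hq, ?_⟩, h₃ q'.2, ⟨q', hq', ?_⟩⟩
    · have h1 : h₁ q.1 = h₁ s := congrArg Prod.fst hqe
      have h2 : h₁ q.2 = h₁ t := congrArg Prod.snd hqe
      simp only [Prod.map, hcomp, h1, h2]
    · have h1 : h₁ q'.1 = h₁ t := congrArg Prod.fst hq'e
      simp only [Prod.map, hcomp, h1]
  constructor
  · rintro ⟨s, t⟩ ⟨hmem, u, hu⟩
    exact ⟨⟨(s, t), hmem, rfl⟩, h₃ u, ⟨(t, u), hu, rfl⟩⟩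
  · intro hcontra
    obtain ⟨p, hp1, hp2⟩ := Set.not_subset.mp himp.2
    exact hp2 (hcontra (hsub13 hp1))
end

section
/- Preservation of EU properties under existential abstraction: let h : S₁ → S₂ be an existential abstraction map from (S₁, I₁, R₁) to (S₂, I₂, R₂) and let P, Q ⊆ S₂. If there exist a path π of (S₁, I₁, R₁) and n ∈ ℕ with π n ∈ h⁻¹' Q and π m ∈ h⁻¹' P for all m < n, then there exist a path π' of (S₂, I₂, R₂) and n' ∈ ℕ with π' n' ∈ Q and π' m ∈ P for all m < n'. -/
/-- Preservation of EU properties under existential abstraction. -/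
theorem existential_abstraction_preserves_EU
    {S₁ S₂ : Type*} (h : S₁ → S₂)
    (I₁ : Set S₁) (R₁ : Set (S₁ × S₁)) (I₂ : Set S₂) (R₂ : Set (S₂ × S₂))
    (hI : ∀ s ∈ I₁, h s ∈ I₂)
    (hR : ∀ s s', (s, s') ∈ R₁ → (h s, h s') ∈ R₂)
    (P Q : Set S₂)
    (hEU : ∃ π : ℕ → S₁, π 0 ∈ I₁ ∧ (∀ n, (π n, π (n + 1)) ∈ R₁) ∧
      ∃ n, π n ∈ h ⁻¹' Q ∧ ∀ m < n, π m ∈ h ⁻¹' P) :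
    ∃ π' : ℕ → S₂, π' 0 ∈ I₂ ∧ (∀ n, (π' n, π' (n + 1)) ∈ R₂) ∧
      ∃ n', π' n' ∈ Q ∧ ∀ m < n', π' m ∈ P := by
  obtain ⟨π, h0, hstep, n, hn, hm⟩ := hEU
  exact ⟨h ∘ π, hI _ h0, fun k => hR _ _ (hstep k), n, hn, fun m hmn => hm m hmn⟩
end

section
/- Soundness of abstract model checking for AG properties (instance of Theorem 2): let h : S₁ → S₂ be an existential abstraction map from (S₁, I₁, R₁) to (S₂, I₂, R₂) and let P ⊆ S₂. If every state R₂-reachable from any initial state in I₂ belongs to P, then every state R₁-reachable from any initial state in I₁ belongs to the concretization h⁻¹' P. -/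
/-- Soundness of abstract model checking for AG properties. -/
theorem abstract_model_checking_sound_AG
    {S₁ S₂ : Type*} (h : S₁ → S₂)
    (I₁ : Set S₁) (R₁ : Set (S₁ × S₁)) (I₂ : Set S₂) (R₂ : Set (S₂ × S₂))
    (hI : ∀ s ∈ I₁, h s ∈ I₂)
    (hR : ∀ s s', (s, s') ∈ R₁ → (h s, h s') ∈ R₂)
    (P : Set S₂)
    (hAG : ∀ s' ∈ I₂, ∀ t',
      Relation.ReflTransGen (fun a b => (a, b) ∈ R₂) s' t' → t' ∈ P) :
    ∀ s ∈ I₁, ∀ t,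
      Relation.ReflTransGen (fun a b => (a, b) ∈ R₁) s t → t ∈ h ⁻¹' P := by
  intro s hs t ht
  exact hAG (h s) (hI s hs) (h t)
    (Relation.ReflTransGen.lift (p := fun a b => (a, b) ∈ R₂) h (fun a b hab => hR a b hab) s t ht)
end

section
/- Soundness of abstract model checking for AF properties (instance of Theorem 2): let h : S₁ → S₂ be an existential abstraction map from (S₁, I₁, R₁) to (S₂, I₂, R₂) and let P ⊆ S₂. If every path π' of (S₂, I₂, R₂) satisfies π' n ∈ P for some n ∈ ℕ, then every path π of (S₁, I₁, R₁) satisfies π n ∈ h⁻¹' P for some n ∈ ℕ. -/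
/-- Soundness of abstract model checking for AF properties. -/
theorem abstract_model_checking_sound_AF
    {S₁ S₂ : Type*} (h : S₁ → S₂)
    (I₁ : Set S₁) (R₁ : Set (S₁ × S₁)) (I₂ : Set S₂) (R₂ : Set (S₂ × S₂))
    (hI : ∀ s ∈ I₁, h s ∈ I₂)
    (hR : ∀ s s', (s, s') ∈ R₁ → (h s, h s') ∈ R₂)
    (P : Set S₂)
    (hAF : ∀ π' : ℕ → S₂, π' 0 ∈ I₂ → (∀ n, (π' n, π' (n + 1)) ∈ R₂) →
      ∃ n, π' n ∈ P) :
    ∀ π : ℕ → S₁, π 0 ∈ I₁ → (∀ n, (π n, π (n + 1)) ∈ R₁) →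
      ∃ n, π n ∈ h ⁻¹' P := by
  intro π h0 hstep
  exact hAF (h ∘ π) (hI _ h0) (fun n => hR _ _ (hstep n))
end

section
/- Soundness of abstract model checking for AU properties (instance of Theorem 2): let h : S₁ → S₂ be an existential abstraction map from (S₁, I₁, R₁) to (S₂, I₂, R₂) and let P, Q ⊆ S₂. If for every path π' of (S₂, I₂, R₂) there exists n ∈ ℕ with π' n ∈ Q and π' m ∈ P for all m < n, then for every path π of (S₁, I₁, R₁) there exists n ∈ ℕ with π n ∈ h⁻¹' Q and π m ∈ h⁻¹' P for all m < n. -/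
/-- Soundness of abstract model checking for AU properties. -/
theorem abstract_model_checking_sound_AU
    {S₁ S₂ : Type*} (h : S₁ → S₂)
    (I₁ : Set S₁) (R₁ : Set (S₁ × S₁)) (I₂ : Set S₂) (R₂ : Set (S₂ × S₂))
    (hI : ∀ s ∈ I₁, h s ∈ I₂)
    (hR : ∀ s s', (s, s') ∈ R₁ → (h s, h s') ∈ R₂)
    (P Q : Set S₂)
    (hAU : ∀ π' : ℕ → S₂, π' 0 ∈ I₂ → (∀ n, (π' n, π' (n + 1)) ∈ R₂) →
      ∃ n, π' n ∈ Q ∧ ∀ m < n, π' m ∈ P) :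
    ∀ π : ℕ → S₁, π 0 ∈ I₁ → (∀ n, (π n, π (n + 1)) ∈ R₁) →
      ∃ n, π n ∈ h ⁻¹' Q ∧ ∀ m < n, π m ∈ h ⁻¹' P := by
  intro π h0 hstep
  exact hAU (fun n => h (π n)) (hI _ h0) (fun n => hR _ _ (hstep n))
end

section
/- Counterexamples to AG properties are inherited by incremental abstractions (instance of Lemma 4): let S = A × B × C, f : A → A', g : B → B', and h₁, h₃, m₂' be as in the context; let I ⊆ S, R ⊆ S × S, and let the abstract systems be T₁ = (h₁ '' I, (Prod.map h₁ h₁) '' R) and T₃ = (h₃ '' I, (Prod.map h₃ h₃) '' R). For any P ⊆ A' × B' × C, if some state s₁ ∈ h₁ '' I can ((Prod.map h₁ h₁) '' R)-reach a state t₁ ∉ m₂'⁻¹' P, then some state s₃ ∈ h₃ '' I can ((Prod.map h₃ h₃) '' R)-reach a state t₃ ∉ P. -/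
/-- Counterexamples to AG properties are inherited by incremental
abstractions. -/
theorem AG_counterexample_inherited
    {A A' B B' C : Type*} (f : A → A') (g : B → B')
    (h₁ : A × B × C → A' × B × C) (h₃ : A × B × C → A' × B' × C)
    (m₂' : A' × B × C → A' × B' × C)
    (hh₁ : ∀ a b c, h₁ (a, b, c) = (f a, b, c))
    (hh₃ : ∀ a b c, h₃ (a, b, c) = (f a, g b, c))
    (hm₂ : ∀ a' b c, m₂' (a', b, c) = (a', g b, c))
    (I : Set (A × B × C)) (R : Set ((A × B × C) × (A × B × C)))
    (P : Set (A' × B' × C))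
    (hcex : ∃ s₁ ∈ h₁ '' I, ∃ t₁ ∉ m₂' ⁻¹' P,
      Relation.ReflTransGen (fun a b => (a, b) ∈ (Prod.map h₁ h₁) '' R) s₁ t₁) :
    ∃ s₃ ∈ h₃ '' I, ∃ t₃ ∉ P,
      Relation.ReflTransGen (fun a b => (a, b) ∈ (Prod.map h₃ h₃) '' R) s₃ t₃ := by
  have key : ∀ s : A × B × C, m₂' (h₁ s) = h₃ s := by
    rintro ⟨a, b, c⟩
    rw [hh₁, hh₃, hm₂]
  obtain ⟨s₁, ⟨s, hsI, hs⟩, t₁, ht₁, hreach⟩ := hcex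
  refine ⟨m₂' s₁, ⟨s, hsI, by rw [← key, hs]⟩, m₂' t₁, ht₁, ?_⟩
  clear ht₁
  induction hreach with
  | refl => exact Relation.ReflTransGen.refl
  | tail _ hstep ih =>
      refine ih.tail ?_
      obtain ⟨⟨u, v⟩, huv, heq⟩ := hstep
      exact ⟨(u, v), huv, by
        simp only [Prod.map] at heq ⊢
        obtain ⟨h1, h2⟩ := Prod.mk.injEq _ _ _ _ ▸ heq
        simp [← h1, ← h2, key]⟩
end
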